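/- In ℝ³ there exist 6 unit vectors pairwise satisfying |q_i · q_j| = 1/√5, given by the vertices of a regular icosahedron: up to normalization by √(1+φ²), the vectors (0,1,φ), (0,1,−φ), (1,φ,0), (1,−φ,0), (φ,0,1), (−φ,0,1), where φ = (1+√5)/2. -/

import Mathlib

open Matrix

/-- The golden ratio. -/
noncomputable def φ : ℝ := (1 + Real.sqrt 5) / 2

/-- The six icosahedral unit vectors in ℝ³. -/
noncomputable def icoVecs : Fin 6 → Fin 3 → ℝ := fun i =>
  (Real.sqrt (1 + φ ^ 2))⁻¹ •
    ![![0, 1, φ], ![0, 1, -φ], ![1, φ, 0], ![1, -φ, 0], ![φ, 0, 1], ![-φ, 0, 1]] i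

lemma hφ2 : φ ^ 2 = φ + 1 := by
  have h5 : Real.sqrt 5 ^ 2 = 5 := Real.sq_sqrt (by norm_num)
  unfold φ; nlinarith [h5]

lemma hφpos : 1 < φ := by
  unfold φ
  nlinarith [Real.sqrt_pos.2 (show (0:ℝ) < 5 by norm_num), Real.sq_sqrt (show (0:ℝ) ≤ 5 by norm_num)]

lemma hsqrt5 : Real.sqrt 5 = 2 * φ - 1 := by unfold φ; ring

lemma hssq : Real.sqrt (1 + φ ^ 2) ^ 2 = 2 + φ := by
  rw [Real.sq_sqrt (by nlinarith [hφpos])]; rw [hφ2]; ring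

lemma hsne : Real.sqrt (1 + φ ^ 2) ≠ 0 := by
  intro h
  have := hssq
  rw [h] at this
  nlinarith [hφpos]

lemma habs : ∀ x : ℝ, x = φ * (Real.sqrt (1 + φ ^ 2))⁻¹ ^ 2 ∨
    x = -(φ * (Real.sqrt (1 + φ ^ 2))⁻¹ ^ 2) → |x| = (Real.sqrt 5)⁻¹ := by
  intro x hx
  have h21 : (0:ℝ) < 2 * φ - 1 := by nlinarith [hφpos]
  have hval : φ * (Real.sqrt (1 + φ ^ 2))⁻¹ ^ 2 = (Real.sqrt 5)⁻¹ := by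
    rw [hsqrt5]
    field_simp
    rw [hssq, eq_div_iff (by nlinarith [hφpos])]; nlinarith [hssq, hφpos, hφ2]
  have hpos' : (0:ℝ) < (Real.sqrt 5)⁻¹ := by rw [hsqrt5]; positivity
  rcases hx with h | h
  · rw [h, hval, abs_of_pos hpos']
  · rw [h, hval, abs_neg, abs_of_pos hpos']

/-- In ℝ³ the six unit vectors given by the vertices of a regular icosahedron
pairwise satisfy `|q_i ⬝ q_j| = 1/√5`. -/
theorem stmt_11 :
    (∀ i, ∑ k, icoVecs i k ^ 2 = 1) ∧
      ∀ i j, i ≠ j → |icoVecs i ⬝ᵥ icoVecs j| = 1 / Real.sqrt 5 := by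
  have hs := hssq
  have hp := hφpos
  constructor
  · intro i
    fin_cases i <;>
    · simp [icoVecs, Fin.sum_univ_three, Matrix.cons_val_succ,
        show (5:Fin 6) = (0:Fin 1).succ.succ.succ.succ.succ from rfl]
      field_simp
      all_goals nlinarith [hs, hp, hφ2]
  · intro i j hij
    fin_cases i <;> fin_cases j <;> first
    | exact absurd rfl hij
    | · simp [icoVecs, dotProduct, Fin.sum_univ_three, Matrix.cons_val_succ, -abs_mul, -abs_inv,
          show (5:Fin 6) = (0:Fin 1).succ.succ.succ.succ.succ from rfl]
        apply habs
        first
        | (left; linear_combination (0:ℝ) * hφ2)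
        | (right; linear_combination (0:ℝ) * hφ2)
        | (left; linear_combination ((Real.sqrt (1 + φ ^ 2))⁻¹ ^ 2) * hφ2)
        | (right; linear_combination (-((Real.sqrt (1 + φ ^ 2))⁻¹ ^ 2)) * hφ2)
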